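/- Let e_n(x) = e·(1 + Σ_{k=1}^n (-1)^k f_k x^k) with f_k = (-1)^k e_k > 0 strictly decreasing, where e_k are the Maclaurin coefficients of (1+x)^{1/x}/e. For fixed x ∈ (-1, 0), the partial sums are strictly increasing in n and all lie below e(x): e₀(x) < e₁(x) < e₂(x) < ⋯ < e(x). -/

import Mathlib

/-!
With `w = -x` we have `e(x)/e = exp (L w - 1)`, where `L w = -log (1 - w) / w = ∑ w^k / (k+1)`.
The Maclaurin coefficients `a k` of `P = exp (L - 1)` are forced by `P' = P L'`, which is a
recursion for `a (n+1)` with nonnegative weights, so all `a k` are positive. By uniqueness of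
power series `e k = (-1)^k a k`, hence for `x < 0` every term `e k * x^k = a k * |x|^k` is
positive and the partial sums increase strictly towards their sum `e(x)/e`.
-/

/-- `(1+x)^{1/x}` extended by `e` at `0`. -/
noncomputable def eFun (x : ℝ) : ℝ :=
  if x = 0 then Real.exp 1 else Real.exp (Real.log (1 + x) / x)

open Real Finset
open scoped NNReal

theorem summable_succ_mul_geometric {r : ℝ} (h0 : 0 ≤ r) (h1 : r < 1) :
    Summable fun k : ℕ => ((k : ℝ) + 1) * r ^ k := by
  have hr : ‖r‖ < 1 := by rwa [norm_of_nonneg h0]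
  refine ((summable_pow_mul_geometric_of_norm_lt_one 1 hr).add
    (summable_geometric_of_lt_one h0 h1)).congr fun k => ?_
  simp only [pow_one]
  ring

theorem summable_norm_mul_pow {c : ℕ → ℝ} {C : ℝ} (hc : ∀ k, |c k| ≤ C) {w : ℝ} (hw : |w| < 1) :
    Summable fun k => ‖c k * w ^ k‖ :=
  .of_nonneg_of_le (fun _ => norm_nonneg _)
    (fun k => by
      rw [norm_mul, norm_pow, norm_eq_abs, norm_eq_abs]
      exact mul_le_mul_of_nonneg_right (hc k) (by positivity))
    ((summable_geometric_of_lt_one (abs_nonneg w) hw).mul_left C)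

theorem norm_succ_mul_mul_pow_le {c : ℕ → ℝ} {C : ℝ} (hc : ∀ k, |c k| ≤ C) {z r : ℝ}
    (hz : |z| ≤ r) (k : ℕ) :
    ‖((k : ℝ) + 1) * c (k + 1) * z ^ k‖ ≤ C * (((k : ℝ) + 1) * r ^ k) := by
  have hC : 0 ≤ C := (abs_nonneg _).trans (hc 0)
  have hck := hc (k + 1)
  calc ‖((k : ℝ) + 1) * c (k + 1) * z ^ k‖ = ((k : ℝ) + 1) * |c (k + 1)| * |z| ^ k := by
        rw [norm_mul, norm_mul, norm_pow, norm_eq_abs, norm_eq_abs, norm_eq_abs,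
          abs_of_nonneg (by positivity : (0 : ℝ) ≤ k + 1)]
    _ ≤ ((k : ℝ) + 1) * C * r ^ k := by gcongr
    _ = C * (((k : ℝ) + 1) * r ^ k) := by ring

theorem summable_norm_succ_mul_mul_pow {c : ℕ → ℝ} {C : ℝ} (hc : ∀ k, |c k| ≤ C) {w : ℝ}
    (hw : |w| < 1) : Summable fun k : ℕ => ‖((k : ℝ) + 1) * c (k + 1) * w ^ k‖ :=
  .of_nonneg_of_le (fun _ => norm_nonneg _) (norm_succ_mul_mul_pow_le hc le_rfl)
    ((summable_succ_mul_geometric (abs_nonneg w) hw).mul_left C)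

theorem hasDerivAt_tsum_mul_pow {c : ℕ → ℝ} {C : ℝ} (hc : ∀ k, |c k| ≤ C) {w : ℝ}
    (hw : |w| < 1) :
    HasDerivAt (fun z => ∑' k, c k * z ^ k) (∑' k : ℕ, ((k : ℝ) + 1) * c (k + 1) * w ^ k) w := by
  obtain ⟨r, hwr, hr⟩ := exists_between hw
  have hr0 : 0 ≤ r := (abs_nonneg w).trans hwr.le
  have hwI : w ∈ Set.Ioo (-r) r := abs_lt.mp hwr
  have hball : ∀ z ∈ Set.Ioo (-r) r, |z| < 1 := fun z hz => (abs_lt.mpr hz).trans hr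
  have hshift : ∀ z ∈ Set.Ioo (-r) r,
      ∑' k, c k * z ^ k = c 0 + ∑' k : ℕ, c (k + 1) * z ^ (k + 1) := fun z hz => by
    rw [(summable_norm_mul_pow hc (hball z hz)).of_norm.tsum_eq_zero_add]
    simp
  have hderiv : ∀ (k : ℕ) (z : ℝ), HasDerivAt (fun z => c (k + 1) * z ^ (k + 1))
      (((k : ℝ) + 1) * c (k + 1) * z ^ k) z := fun k z =>
    ((hasDerivAt_pow (k + 1) z).const_mul (c (k + 1))).congr_deriv (by
      rw [Nat.add_sub_cancel]; push_cast; ring)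
  have hsum : Summable fun k : ℕ => c (k + 1) * w ^ (k + 1) :=
    (summable_nat_add_iff (f := fun k => c k * w ^ k) 1).mpr (summable_norm_mul_pow hc hw).of_norm
  have htail := hasDerivAt_tsum_of_isPreconnected
    ((summable_succ_mul_geometric hr0 hr).mul_left C) isOpen_Ioo isPreconnected_Ioo
    (fun k z _ => hderiv k z)
    (fun k z hz => norm_succ_mul_mul_pow_le hc (abs_lt.mpr hz).le k) hwI hsum hwI
  exact (htail.const_add (c 0)).congr_of_eventuallyEq
    (Filter.eventually_of_mem (isOpen_Ioo.mem_nhds hwI) hshift)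

/-- The Maclaurin coefficients of `exp (∑ c k * w ^ k - c 0)`: the recursion is the coefficient
form `(n+1) a (n+1) = ∑_{i+j=n} a i * (j+1) c (j+1)` of the differential equation `P' = P L'`. -/
noncomputable def expCoeff (c : ℕ → ℝ) : ℕ → ℝ
  | 0 => 1
  | n + 1 => (∑ j : Fin (n + 1), expCoeff c j * (((n - j : ℕ) + 1 : ℝ) * c (n - j + 1))) / (n + 1)

theorem expCoeff_zero (c : ℕ → ℝ) : expCoeff c 0 = 1 := by
  rw [expCoeff]

theorem expCoeff_succ (c : ℕ → ℝ) (n : ℕ) : expCoeff c (n + 1) =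
    (∑ j ∈ range (n + 1), expCoeff c j * (((n - j : ℕ) + 1 : ℝ) * c (n - j + 1))) / (n + 1) := by
  rw [expCoeff, Fin.sum_univ_eq_sum_range
    (fun j => expCoeff c j * (((n - j : ℕ) + 1 : ℝ) * c (n - j + 1)))]

theorem succ_mul_expCoeff_succ (c : ℕ → ℝ) (n : ℕ) : ((n : ℝ) + 1) * expCoeff c (n + 1) =
    ∑ ij ∈ antidiagonal n, expCoeff c ij.1 * ((ij.2 + 1 : ℝ) * c (ij.2 + 1)) := by
  rw [expCoeff_succ, Nat.sum_antidiagonal_eq_sum_range_succ_mk, mul_div_cancel₀ _ (by positivity)]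

theorem tsum_mul_pow_zero (b : ℕ → ℝ) : ∑' k, b k * (0 : ℝ) ^ k = b 0 := by
  rw [tsum_eq_single 0 fun k hk => by simp [hk]]
  simp

theorem hasSum_expCoeff_mul_pow {c : ℕ → ℝ} {A C : ℝ} (ha : ∀ k, |expCoeff c k| ≤ A)
    (hc : ∀ k, |c k| ≤ C) {w : ℝ} (hw : |w| < 1) :
    HasSum (fun k => expCoeff c k * w ^ k) (exp (∑' k, c k * w ^ k - c 0)) := by
  set P := fun z => ∑' k, expCoeff c k * z ^ k
  set L := fun z => ∑' k, c k * z ^ k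
  have hP : ∀ z, |z| < 1 →
      HasDerivAt P (P z * ∑' k : ℕ, ((k : ℝ) + 1) * c (k + 1) * z ^ k) z := fun z hz => by
    refine (hasDerivAt_tsum_mul_pow ha hz).congr_deriv ?_
    rw [tsum_mul_tsum_eq_tsum_sum_antidiagonal_of_summable_norm (summable_norm_mul_pow ha hz)
      (summable_norm_succ_mul_mul_pow hc hz)]
    refine tsum_congr fun n => ?_
    rw [succ_mul_expCoeff_succ, sum_mul]
    refine sum_congr rfl fun ij hij => ?_
    rw [← mem_antidiagonal.mp hij, pow_add]
    ring
  have hG : ∀ z ∈ Set.Ioo (-1 : ℝ) 1, HasDerivAt (fun z => P z * exp (-L z)) 0 z := fun z hz => by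
    have hz : |z| < 1 := abs_lt.mpr hz
    refine ((hP z hz).mul (hasDerivAt_tsum_mul_pow hc hz).neg.exp).congr_deriv ?_
    ring
  have hconst : P w * exp (-L w) = P 0 * exp (-L 0) :=
    isOpen_Ioo.is_const_of_deriv_eq_zero isPreconnected_Ioo
      (fun z hz => (hG z hz).differentiableAt.differentiableWithinAt)
      (fun z hz => (hG z hz).deriv) (abs_lt.mp hw) (by norm_num)
  have hP0 : P 0 = 1 := by simp only [P, tsum_mul_pow_zero, expCoeff_zero]
  have hL0 : L 0 = c 0 := tsum_mul_pow_zero c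
  have hPw : P w = exp (L w - c 0) := by
    calc P w = P w * exp (-L w) * exp (L w) := by
          rw [mul_assoc, ← exp_add, neg_add_cancel, exp_zero, mul_one]
      _ = exp (L w - c 0) := by
          rw [hconst, hP0, hL0, one_mul, ← exp_add, neg_add_eq_sub]
  exact hPw ▸ (summable_norm_mul_pow ha hw).of_norm.hasSum

theorem expCoeff_nonneg {c : ℕ → ℝ} (hc : ∀ k, 0 ≤ c k) (n : ℕ) : 0 ≤ expCoeff c n := by
  induction n using Nat.strong_induction_on with
  | _ n ih =>
    cases n with
    | zero => rw [expCoeff_zero]; exact zero_le_one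
    | succ n =>
      rw [expCoeff_succ]
      exact div_nonneg (sum_nonneg fun j hj =>
        mul_nonneg (ih j (mem_range.mp hj)) (mul_nonneg (by positivity) (hc _))) (by positivity)

theorem expCoeff_pos {c : ℕ → ℝ} (hc : ∀ k, 0 ≤ c k) (hc₁ : 0 < c 1) (n : ℕ) :
    0 < expCoeff c n := by
  induction n with
  | zero => rw [expCoeff_zero]; exact zero_lt_one
  | succ n ih =>
    rw [expCoeff_succ]
    refine div_pos (sum_pos' (fun j _ =>
      mul_nonneg (expCoeff_nonneg hc j) (mul_nonneg (by positivity) (hc _))) ?_) (by positivity)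
    exact ⟨n, self_mem_range_succ n, by simpa using mul_pos ih hc₁⟩

theorem expCoeff_le_one {c : ℕ → ℝ} (hc : ∀ k, 0 ≤ c k)
    (hc' : ∀ k : ℕ, ((k : ℝ) + 1) * c (k + 1) ≤ 1) (n : ℕ) : expCoeff c n ≤ 1 := by
  induction n using Nat.strong_induction_on with
  | _ n ih =>
    cases n with
    | zero => rw [expCoeff_zero]
    | succ n =>
      rw [expCoeff_succ, div_le_one (by positivity)]
      calc ∑ j ∈ range (n + 1), expCoeff c j * (((n - j : ℕ) + 1 : ℝ) * c (n - j + 1))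
          ≤ ∑ j ∈ range (n + 1), (1 : ℝ) := sum_le_sum fun j hj =>
            mul_le_one₀ (ih j (mem_range.mp hj)) (mul_nonneg (by positivity) (hc _)) (hc' _)
        _ = n + 1 := by simp

theorem hasSum_inv_succ_mul_pow {w : ℝ} (hw : |w| < 1) (hw₀ : w ≠ 0) :
    HasSum (fun k : ℕ => ((k : ℝ) + 1)⁻¹ * w ^ k) (-log (1 - w) / w) := by
  have h := (hasSum_pow_div_log_of_abs_lt_one hw).div_const w
  rwa [show (fun k : ℕ => w ^ (k + 1) / (k + 1) / w) = fun k : ℕ => ((k : ℝ) + 1)⁻¹ * w ^ k from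
    funext fun k => by field_simp; ring] at h

theorem eFun_div_exp_one {x : ℝ} (hx : |x| < 1) :
    eFun x / exp 1 = exp (∑' k : ℕ, ((k : ℝ) + 1)⁻¹ * (-x) ^ k - 1) := by
  rcases eq_or_ne x 0 with rfl | hx₀
  · simp [eFun, tsum_mul_pow_zero]
  · rw [(hasSum_inv_succ_mul_pow (by rwa [abs_neg]) (neg_ne_zero.mpr hx₀)).tsum_eq, eFun,
      if_neg hx₀, exp_sub, sub_neg_eq_add, add_comm, neg_div_neg_eq]

theorem hasFPowerSeriesOnBall_ofScalars_of_hasSum {c : ℕ → ℝ} {f : ℝ → ℝ} {r : ℝ≥0}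
    (hr : 0 < r) (hf : ∀ x ∈ Set.Ioo (-(r : ℝ)) r, HasSum (fun k => c k * x ^ k) (f x)) :
    HasFPowerSeriesOnBall f (FormalMultilinearSeries.ofScalars ℝ c) 0 r where
  r_le := by
    refine le_of_forall_lt_imp_le_of_dense fun ρ hρ => ?_
    lift ρ to ℝ≥0 using ne_top_of_lt hρ
    have hρr : (ρ : ℝ) < r := by exact_mod_cast hρ
    have hρ₀ : 0 ≤ (ρ : ℝ) := ρ.2
    refine FormalMultilinearSeries.le_radius_of_tendsto _ (l := 0) ?_
    simpa [norm_mul, FormalMultilinearSeries.ofScalars_norm] using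
      ((hf ρ ⟨by linarith, hρr⟩).summable.tendsto_atTop_zero).norm
  r_pos := by exact_mod_cast hr
  hasSum := fun {y} hy => by
    have hy : |y| < r := by simpa using hy
    simpa [FormalMultilinearSeries.ofScalars_apply_eq, mul_comm] using hf y (abs_lt.mp hy)

theorem eq_of_forall_hasSum_mul_pow {c d : ℕ → ℝ} {f : ℝ → ℝ} {r : ℝ≥0} (hr : 0 < r)
    (hc : ∀ x ∈ Set.Ioo (-(r : ℝ)) r, HasSum (fun k => c k * x ^ k) (f x))
    (hd : ∀ x ∈ Set.Ioo (-(r : ℝ)) r, HasSum (fun k => d k * x ^ k) (f x)) : c = d :=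
  FormalMultilinearSeries.ofScalars_series_injective ℝ ℝ
    ((hasFPowerSeriesOnBall_ofScalars_of_hasSum hr hc).hasFPowerSeriesAt.eq_formalMultilinearSeries
      (hasFPowerSeriesOnBall_ofScalars_of_hasSum hr hd).hasFPowerSeriesAt)

theorem hasSum_eFun_div_exp_one {x : ℝ} (hx : |x| < 1) :
    HasSum (fun k => (-1) ^ k * expCoeff (fun k : ℕ => ((k : ℝ) + 1)⁻¹) k * x ^ k)
      (eFun x / exp 1) := by
  have hc : ∀ k : ℕ, 0 ≤ ((k : ℝ) + 1)⁻¹ := fun k => by positivity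
  have hc' : ∀ k : ℕ, |((k : ℝ) + 1)⁻¹| ≤ 1 := fun k => by
    rw [abs_of_nonneg (hc k)]; exact inv_le_one_of_one_le₀ (by simp)
  have ha : ∀ k, |expCoeff (fun k : ℕ => ((k : ℝ) + 1)⁻¹) k| ≤ 1 := fun k => by
    refine abs_le.mpr ⟨by linarith [expCoeff_nonneg hc k], expCoeff_le_one hc (fun k => ?_) k⟩
    rw [← div_eq_mul_inv, div_le_one (by positivity)]
    push_cast
    linarith
  rw [eFun_div_exp_one hx]
  convert hasSum_expCoeff_mul_pow ha hc' (by rwa [abs_neg]) using 2 with k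
  · rw [neg_pow]; ring
  · simp

theorem partial_sums_increasing_on_neg (e : ℕ → ℝ)
    (he : ∀ x ∈ Set.Ioo (-1 : ℝ) 1, HasSum (fun k : ℕ => e k * x ^ k) (eFun x / Real.exp 1))
    (x : ℝ) (hx : x ∈ Set.Ioo (-1 : ℝ) 0)
    (en : ℕ → ℝ) (hen : ∀ n, en n = Real.exp 1 * ∑ k ∈ Finset.range (n + 1), e k * x ^ k) :
    StrictMono en ∧ ∀ n : ℕ, en n < eFun x := by
  have hcoeff : e = fun k => (-1) ^ k * expCoeff (fun k : ℕ => ((k : ℝ) + 1)⁻¹) k :=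
    eq_of_forall_hasSum_mul_pow (r := 1) one_pos (by simpa using he)
      (by simpa using fun y hy => hasSum_eFun_div_exp_one (abs_lt.mpr hy))
  have hterm : ∀ k, 0 < e k * x ^ k := fun k => by
    have hpos := mul_pos
      (expCoeff_pos (c := fun k : ℕ => ((k : ℝ) + 1)⁻¹) (fun k => by positivity) (by norm_num) k)
      (pow_pos (neg_pos.mpr hx.2) k)
    exact hpos.trans_eq (by rw [hcoeff, neg_pow]; ring)
  have hlt : ∀ n, en n < en (n + 1) := fun n => by
    rw [hen, hen, sum_range_succ _ (n + 1)]
    exact mul_lt_mul_of_pos_left (lt_add_of_pos_right _ (hterm _)) (exp_pos 1)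
  have hle : ∀ n, en n ≤ eFun x := fun n => by
    calc en n ≤ exp 1 * (eFun x / exp 1) := by
          rw [hen]
          gcongr
          exact sum_le_hasSum _ (fun k _ => (hterm k).le) (he x ⟨hx.1, hx.2.trans one_pos⟩)
      _ = eFun x := mul_div_cancel₀ _ (exp_pos 1).ne'
  exact ⟨strictMono_nat_of_lt_succ hlt, fun n => (hlt n).trans_le (hle (n + 1))⟩
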